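/- Suppose Pre(N,a) is nonsingular for some N ≥ 2. Then the polynomial f_c^N(0) - a ∈ K[c] is separable, i.e., it has exactly 2^{N-1} distinct roots c ∈ K. -/

import Mathlib

/-!
The partial derivative `∂ₓ f_c^N(x) = 2^N ∏_{k<N} f_c^k(x)` contains the factor
`f_c^0(x) = x`, so it vanishes along the line `x = 0`. Nonsingularity of `Pre(N,a)` at its
points `(0, c)` therefore says that `∂_c f_c^N(0) = d/dc (f_c^N(0))` does not vanish at any
root `c` of `f_c^N(0) - a`, i.e. this polynomial has no multiple roots. It is monic of degree
`2^{N-1}`.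
-/

open MvPolynomial

section QuadraticIterate

variable (R : Type*) [CommRing R]

/-- `f_c^n(x)` with `x = X 0` and `c = X 1`. -/
noncomputable def quadIter (n : ℕ) : MvPolynomial (Fin 2) R :=
  (fun p : MvPolynomial (Fin 2) R => p ^ 2 + X 1)^[n] (X 0)

noncomputable def quadIterZero (n : ℕ) : Polynomial R :=
  (fun p : Polynomial R => p ^ 2 + Polynomial.X)^[n] 0

variable {R}

theorem quadIter_succ (n : ℕ) : quadIter R (n + 1) = quadIter R n ^ 2 + X 1 :=
  Function.iterate_succ_apply' _ _ _

theorem quadIterZero_succ (n : ℕ) :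
    quadIterZero R (n + 1) = quadIterZero R n ^ 2 + Polynomial.X :=
  Function.iterate_succ_apply' _ _ _

theorem eval_quadIterZero (n : ℕ) (c : R) :
    (quadIterZero R n).eval c = eval ![0, c] (quadIter R n) := by
  induction n with
  | zero => simp [quadIterZero, quadIter]
  | succ n ih => simp [quadIterZero_succ, quadIter_succ, ih]

theorem eval_derivative_quadIterZero (n : ℕ) (c : R) :
    (Polynomial.derivative (quadIterZero R n)).eval c =
      eval ![0, c] (pderiv 1 (quadIter R n)) := by
  induction n with
  | zero => simp [quadIterZero, quadIter]
  | succ n ih =>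
    simp only [quadIterZero_succ, quadIter_succ, Polynomial.derivative_sq,
      Polynomial.derivative_X, Polynomial.eval_add, Polynomial.eval_mul, Polynomial.eval_C,
      Polynomial.eval_one, eval_quadIterZero, ih, map_add, map_mul, map_one, Derivation.leibniz_pow,
      Nat.add_one_sub_one, pow_one, pderiv_X, Pi.single_eq_same, nsmul_eq_mul, smul_eq_mul,
      Nat.cast_ofNat, eval_ofNat]
    ring

theorem pderiv_zero_quadIter_succ (n : ℕ) :
    pderiv 0 (quadIter R (n + 1)) = 2 * quadIter R n * pderiv 0 (quadIter R n) := by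
  rw [quadIter_succ, map_add, Derivation.leibniz_pow, pderiv_X_of_ne one_ne_zero, add_zero,
    nsmul_eq_mul, smul_eq_mul, pow_one]
  ring

theorem X_zero_dvd_pderiv_zero_quadIter (n : ℕ) : X 0 ∣ pderiv 0 (quadIter R (n + 1)) := by
  induction n with
  | zero =>
    rw [pderiv_zero_quadIter_succ]
    exact dvd_mul_of_dvd_left (dvd_mul_left _ _) _
  | succ n ih =>
    rw [pderiv_zero_quadIter_succ]
    exact dvd_mul_of_dvd_right ih _

theorem quadIterZero_monic_and_natDegree [Nontrivial R] (n : ℕ) :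
    (quadIterZero R (n + 1)).Monic ∧ (quadIterZero R (n + 1)).natDegree = 2 ^ n := by
  induction n with
  | zero => simp [quadIterZero]
  | succ n ih =>
    obtain ⟨hmonic, hdeg⟩ := ih
    have hsq : (quadIterZero R (n + 1) ^ 2).natDegree = 2 ^ (n + 1) := by
      rw [hmonic.natDegree_pow, hdeg, pow_succ']
    have hlt :
        (Polynomial.X : Polynomial R).natDegree < (quadIterZero R (n + 1) ^ 2).natDegree := by
      rw [hsq, Polynomial.natDegree_X]
      exact Nat.one_lt_two_pow (Nat.succ_ne_zero n)
    rw [quadIterZero_succ]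
    exact ⟨(hmonic.pow 2).add_of_left (Polynomial.degree_lt_degree hlt),
      (Polynomial.natDegree_add_eq_left_of_natDegree_lt hlt).trans hsq⟩

end QuadraticIterate

namespace Polynomial

variable {K : Type*} [Field K] [IsAlgClosed K] {f : K[X]}

theorem separable_of_forall_not_isRoot_derivative
    (h : ∀ x, f.IsRoot x → ¬ f.derivative.IsRoot x) : f.Separable := by
  rw [separable_def, isCoprime_iff_aeval_ne_zero_of_isAlgClosed (k := K) K]
  intro x
  simpa [coe_aeval_eq_eval, or_iff_not_imp_left] using h x

theorem card_roots_toFinset_of_separable [DecidableEq K] (hf : f.Separable) :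
    f.roots.toFinset.card = f.natDegree := by
  rw [Multiset.toFinset_card_of_nodup (nodup_roots hf),
    (IsAlgClosed.splits f).natDegree_eq_card_roots]

end Polynomial

theorem iterate_at_zero_separable_general {K : Type*} [Field K] [IsAlgClosed K] [DecidableEq K]
    (a : K) (N : ℕ) (hN : 2 ≤ N)
    (hns : ∀ x c : K,
      MvPolynomial.eval ![x, c]
          ((fun p : MvPolynomial (Fin 2) K => p ^ 2 + X 1)^[N] (X 0)) = a →
      ¬(MvPolynomial.eval ![x, c] (pderiv 0
            ((fun p : MvPolynomial (Fin 2) K => p ^ 2 + X 1)^[N] (X 0))) = 0 ∧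
        MvPolynomial.eval ![x, c] (pderiv 1
            ((fun p : MvPolynomial (Fin 2) K => p ^ 2 + X 1)^[N] (X 0))) = 0)) :
    ((fun p : Polynomial K => p ^ 2 + Polynomial.X)^[N] 0 - Polynomial.C a).Separable ∧
    ((fun p : Polynomial K => p ^ 2 + Polynomial.X)^[N] 0 -
        Polynomial.C a).roots.toFinset.card = 2 ^ (N - 1) := by
  obtain ⟨n, rfl⟩ : ∃ n, N = n + 1 := ⟨N - 1, by omega⟩
  change (quadIterZero K (n + 1) - Polynomial.C a).Separable ∧
    (quadIterZero K (n + 1) - Polynomial.C a).roots.toFinset.card = 2 ^ (n + 1 - 1)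
  have hsep : (quadIterZero K (n + 1) - Polynomial.C a).Separable := by
    refine Polynomial.separable_of_forall_not_isRoot_derivative
      fun c hroot hderiv => hns 0 c ?_ ⟨?_, ?_⟩
    · rw [← quadIter, ← eval_quadIterZero]
      simpa [sub_eq_zero] using hroot
    · obtain ⟨q, hq⟩ := X_zero_dvd_pderiv_zero_quadIter (R := K) n
      rw [← quadIter, hq]
      simp
    · rw [← quadIter, ← eval_derivative_quadIterZero]
      simpa using hderiv
  refine ⟨hsep, ?_⟩
  rw [Polynomial.card_roots_toFinset_of_separable hsep, Polynomial.natDegree_sub_C,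
    (quadIterZero_monic_and_natDegree n).2, Nat.add_sub_cancel]

/-- If `Pre(N,a)` is nonsingular for some `N ≥ 2`, then the polynomial `f_c^N(0) - a ∈ K[c]`
is separable: it has exactly `2^{N-1}` distinct roots in `K`. -/
theorem iterate_at_zero_separable {K : Type*} [Field K] [IsAlgClosed K] [DecidableEq K]
    (hchar : (2 : K) ≠ 0) (a : K) (N : ℕ) (hN : 2 ≤ N)
    (hns : ∀ x c : K,
      MvPolynomial.eval ![x, c]
          ((fun p : MvPolynomial (Fin 2) K => p ^ 2 + X 1)^[N] (X 0)) = a →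
      ¬(MvPolynomial.eval ![x, c] (pderiv 0
            ((fun p : MvPolynomial (Fin 2) K => p ^ 2 + X 1)^[N] (X 0))) = 0 ∧
        MvPolynomial.eval ![x, c] (pderiv 1
            ((fun p : MvPolynomial (Fin 2) K => p ^ 2 + X 1)^[N] (X 0))) = 0)) :
    ((fun p : Polynomial K => p ^ 2 + Polynomial.X)^[N] 0 - Polynomial.C a).Separable ∧
    ((fun p : Polynomial K => p ^ 2 + Polynomial.X)^[N] 0 -
        Polynomial.C a).roots.toFinset.card = 2 ^ (N - 1) :=
  iterate_at_zero_separable_general a N hN hns
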